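/- Let B ⊆ ℝ^q be a polyhedron and let F be a nonempty face of B. Then Φ(F) is a face of Φ(B). -/

import Mathlib

open Matrix Set Pointwise

noncomputable section

/-- `cone B = {l • x : l ≥ 0, x ∈ conv B}` -/
def coneOf {E : Type*} [AddCommGroup E] [Module ℝ E] (B : Set E) : Set E :=
  {y | ∃ l : ℝ, 0 ≤ l ∧ ∃ x ∈ convexHull ℝ B, y = l • x}

/-- `F` is a face of the convex set `B`. -/
def IsFaceOf {E : Type*} [AddCommGroup E] [Module ℝ E] (F B : Set E) : Prop :=
  Convex ℝ F ∧ F ⊆ B ∧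
    ∀ y ∈ B, ∀ z ∈ B, ∀ l : ℝ, 0 < l → l < 1 → l • y + (1 - l) • z ∈ F → y ∈ F ∧ z ∈ F

/-- recession cone `0⁺B` of a convex set. -/
def recCone {E : Type*} [AddCommGroup E] [Module ℝ E] (B : Set E) : Set E :=
  {d | ∀ x ∈ B, ∀ t : ℝ, 0 ≤ t → x + t • d ∈ B}

/-- lineality space `L(B) = 0⁺B ∩ (−0⁺B)`. -/
def linealOf {E : Type*} [AddCommGroup E] [Module ℝ E] (B : Set E) : Set E :=
  recCone B ∩ -recCone B

/-- dimension of (the affine hull of) a set. -/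
def sdim {E : Type*} [AddCommGroup E] [Module ℝ E] (B : Set E) : ℕ :=
  Module.finrank ℝ (vectorSpan ℝ B)

def IsPolyhedron {d : ℕ} (B : Set (Fin d → ℝ)) : Prop :=
  ∃ (k : ℕ) (W : Matrix (Fin k) (Fin d) ℝ) (v : Fin k → ℝ), B = {x | v ≤ W.mulVec x}

/-- orthogonal complement (as a set) of a set of vectors. -/
def orthSet {d : ℕ} (L : Set (Fin d → ℝ)) : Set (Fin d → ℝ) :=
  {y | ∀ z ∈ L, y ⬝ᵥ z = 0}

/-- polar cone `K° = {w : ∀ y ∈ K, wᵀy ≤ 0}`. -/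
def polarCone {d : ℕ} (K : Set (Fin d → ℝ)) : Set (Fin d → ℝ) :=
  {w | ∀ y ∈ K, w ⬝ᵥ y ≤ 0}

/-- the last index of `Fin q` (1-based index `q`). -/
def lastIdx (q : ℕ) (hq : 0 < q) : Fin q := ⟨q - 1, by omega⟩

/-- `y ↦ (y,1)`. -/
def lift1 {q : ℕ} (y : Fin q → ℝ) : Fin (q + 1) → ℝ := Fin.snoc y 1

/-- `y ↦ (y,0)`. -/
def lift0 {q : ℕ} (y : Fin q → ℝ) : Fin (q + 1) → ℝ := Fin.snoc y 0

/-- `p(y) = (y₁,…,y_q)`. -/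
def projq {q : ℕ} (y : Fin (q + 1) → ℝ) : Fin q → ℝ := fun i => y i.castSucc

/-- `Φ(B) = cl cone (B × {1})`. -/
def PhiMap {q : ℕ} (B : Set (Fin q → ℝ)) : Set (Fin (q + 1) → ℝ) :=
  closure (coneOf (lift1 '' B))

/-- the block matrix `G = (A; −ZᵀP; 0)`. -/
def Gmat {m n q r : ℕ} (A : Matrix (Fin m) (Fin n) ℝ) (P : Matrix (Fin q) (Fin n) ℝ)
    (Z : Matrix (Fin q) (Fin r) ℝ) : Matrix (Fin (m + r + 1)) (Fin n) ℝ :=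
  fun i j =>
    if h : (i : ℕ) < m then A ⟨i, h⟩ j
    else if h2 : (i : ℕ) < m + r then -(∑ l : Fin q, Z l ⟨(i : ℕ) - m, by omega⟩ * P l j)
    else 0

/-- the block matrix `H` with rows `(0, −b)`, `(Zᵀ, 0)` and `(0,…,0,1)`. -/
def Hmat {m q r : ℕ} (b : Fin m → ℝ) (Z : Matrix (Fin q) (Fin r) ℝ) :
    Matrix (Fin (m + r + 1)) (Fin (q + 1)) ℝ :=
  fun i j =>
    if h : (i : ℕ) < m then (if (j : ℕ) = q then -b ⟨i, h⟩ else 0)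
    else if h2 : (i : ℕ) < m + r then
      (if hj : (j : ℕ) < q then Z ⟨j, hj⟩ ⟨(i : ℕ) - m, by omega⟩ else 0)
    else (if (j : ℕ) = q then 1 else 0)

/-- dual objective `D(u,w) = (w₁,…,w_{q−1}, bᵀu)`. -/
def Dmap {m q : ℕ} (b : Fin m → ℝ) (uw : (Fin m → ℝ) × (Fin q → ℝ)) : Fin q → ℝ :=
  fun i => if (i : ℕ) < q - 1 then uw.2 i else b ⬝ᵥ uw.1

/-- `R* = {v : v₁ = ⋯ = v_{q−1} = 0, v_q ≥ 0}`. -/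
def RstarSet (q : ℕ) (hq : 0 < q) : Set (Fin q → ℝ) :=
  {v | (∀ i : Fin q, (i : ℕ) < q - 1 → v i = 0) ∧ 0 ≤ v (lastIdx q hq)}

/-- dual feasible set `T`. -/
def Tset {m n q r : ℕ} (A : Matrix (Fin m) (Fin n) ℝ) (P : Matrix (Fin q) (Fin n) ℝ)
    (Z : Matrix (Fin q) (Fin r) ℝ) (cbar : Fin q → ℝ) :
    Set ((Fin m → ℝ) × (Fin q → ℝ)) :=
  {uw | ∃ v : Fin r → ℝ, 0 ≤ v ∧ uw.2 = Z.mulVec v ∧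
    Aᵀ.mulVec uw.1 = Pᵀ.mulVec uw.2 ∧ cbar ⬝ᵥ uw.2 = 1 ∧ 0 ≤ uw.1}

/-- `φ(y,w) = Σ_{i<q} y_i w_i + y_q (1 − Σ_{i<q} c̄_i w_i) − w_q`. -/
def phiFn {q : ℕ} (hq : 0 < q) (cbar : Fin q → ℝ) (y w : Fin q → ℝ) : ℝ :=
  (∑ i : Fin q, if (i : ℕ) < q - 1 then y i * w i else 0)
    + y (lastIdx q hq) * (1 - ∑ i : Fin q, if (i : ℕ) < q - 1 then cbar i * w i else 0)
    - w (lastIdx q hq)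

/-- duality map `Ψ(F*) = ⋂_{w ∈ F*} {y ∈ Pset : φ(y,w) = 0}`. -/
def PsiMap {q : ℕ} (hq : 0 < q) (cbar : Fin q → ℝ) (Pset : Set (Fin q → ℝ))
    (Fstar : Set (Fin q → ℝ)) : Set (Fin q → ℝ) :=
  ⋂ w ∈ Fstar, {y ∈ Pset | phiFn hq cbar y w = 0}

/-- `My = (−y₁,…,−y_{q−1}, c̄₁y₁+⋯+c̄_{q−1}y_{q−1} − y_{q+1}, y_q)`. -/
def Mmap {q : ℕ} (hq : 0 < q) (cbar : Fin q → ℝ) (y : Fin (q + 1) → ℝ) : Fin (q + 1) → ℝ :=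
  fun i =>
    if (i : ℕ) < q - 1 then -y i
    else if (i : ℕ) = q - 1 then
      (∑ j : Fin q, if (j : ℕ) < q - 1 then cbar j * y j.castSucc else 0) - y (Fin.last q)
    else y ((lastIdx q hq).castSucc)

/-- `M⁻¹w = (−w₁,…,−w_{q−1}, w_{q+1}, −cᵀw)` where `c = (c̄,0)`. -/
def MinvMap {q : ℕ} (cbar : Fin q → ℝ) (w : Fin (q + 1) → ℝ) : Fin (q + 1) → ℝ :=
  fun i =>
    if (i : ℕ) < q - 1 then -w i
    else if (i : ℕ) = q - 1 then w (Fin.last q)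
    else -((Fin.snoc cbar 0 : Fin (q + 1) → ℝ) ⬝ᵥ w)

/-- `p*(w) = (w₁,…,w_{q−1},w_{q+1})`. -/
def pstarMap {q : ℕ} (w : Fin (q + 1) → ℝ) : Fin q → ℝ :=
  fun i => if (i : ℕ) < q - 1 then w i.castSucc else w (Fin.last q)

/-- `y` generates an extreme ray of the pointed convex cone `Q`. -/
def IsExtremeDir {E : Type*} [AddCommGroup E] [Module ℝ E] (Q : Set E) (y : E) : Prop :=
  y ∈ Q ∧ y ≠ 0 ∧ IsFaceOf (coneOf {y}) Q

/-- `σ(u,w) = (u¹, −p(w))` where `u = (u¹,u²,u³) ∈ ℝ^m×ℝ^r×ℝ`. -/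
def sigmaMap {m q r : ℕ} (uw : (Fin (m + r + 1) → ℝ) × (Fin (q + 1) → ℝ)) :
    (Fin m → ℝ) × (Fin q → ℝ) :=
  (fun i => uw.1 (Fin.castLE (by omega) i), -projq uw.2)

/-! Write the polyhedron as `{x | ∀ i, 0 ≤ gᵢ x}` with affine `gᵢ`. A nonempty face `F` is cut out
of it by turning the constraints that vanish on all of `F` into equalities: a point `c ∈ F` at
which every other constraint is strictly positive can be pushed slightly past itself away from any
point `y` of that set while staying in the polyhedron, exhibiting `c` as an interior point of a
segment through `y`. With the homogenizations `ĝᵢ (x, t) = t gᵢ (x / t)` (linear in `(x, t)`),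
`Φ` of such a set `S` is the closed cone
`{(x, t) | t ≥ 0, ĝᵢ (x, t) ≥ 0, ĝᵢ (x, t) = 0 for the tight i}`: it contains `cone (S × {1})`,
and each of its points `y` is the limit of `y + ε (x₀, 1)`, `x₀ ∈ S`, which lie in that cone.
The cone of the face is cut out of the cone of the polyhedron by the vanishing of linear
functionals that are nonnegative there, so it is a face. -/

open Filter Topology

section Faces

variable {E ι : Type*} [AddCommGroup E] [Module ℝ E]

theorem isFaceOf_sep_forall_eq_zero {K : Set E} (hK : Convex ℝ K) (g : ι → E →ₗ[ℝ] ℝ)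
    (hg : ∀ i, ∀ y ∈ K, 0 ≤ g i y) (I : Set ι) :
    IsFaceOf {y ∈ K | ∀ i ∈ I, g i y = 0} K := by
  refine ⟨?_, sep_subset _ _, ?_⟩
  · rintro y ⟨hyK, hy⟩ z ⟨hzK, hz⟩ a b ha hb hab
    exact ⟨hK hyK hzK ha hb hab, fun i hi => by simp [hy i hi, hz i hi]⟩
  · rintro y hyK z hzK l hl0 hl1 ⟨-, h⟩
    have key : ∀ i ∈ I, g i y = 0 ∧ g i z = 0 := by
      intro i hi
      have hsum : l * g i y + (1 - l) * g i z = 0 := by simpa using h i hi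
      have := hg i y hyK
      have := hg i z hzK
      constructor <;> nlinarith
    exact ⟨⟨hyK, fun i hi => (key i hi).1⟩, ⟨hzK, fun i hi => (key i hi).2⟩⟩

/-- The polyhedron `{x | ∀ i, 0 ≤ g i x}` with the constraints indexed by `I` made tight;
`I = ∅` gives the polyhedron itself. -/
def polyhedralFace (g : ι → E →ᵃ[ℝ] ℝ) (I : Set ι) : Set E :=
  {x | ∀ i, 0 ≤ g i x ∧ (i ∈ I → g i x = 0)}

theorem Convex.exists_mem_forall_pos [Finite ι] {F : Set E} (hF : Convex ℝ F)
    (hne : F.Nonempty) {g : ι → E →ᵃ[ℝ] ℝ} (hg : ∀ i, ∀ x ∈ F, 0 ≤ g i x) :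
    ∃ x ∈ F, ∀ i, (∃ y ∈ F, g i y ≠ 0) → 0 < g i x := by
  classical
  have := Fintype.ofFinite ι
  suffices ∀ J : Finset ι, ∃ x ∈ F, ∀ i ∈ J, (∃ y ∈ F, g i y ≠ 0) → 0 < g i x by
    simpa using this Finset.univ
  intro J
  induction J using Finset.induction_on with
  | empty => exact ⟨hne.some, hne.some_mem, by simp⟩
  | insert a J _ ih =>
    obtain ⟨x, hxF, hx⟩ := ih
    by_cases ha : ∃ y ∈ F, g a y ≠ 0
    · obtain ⟨y, hyF, hy⟩ := ha
      refine ⟨(1 / 2 : ℝ) • x + (1 / 2 : ℝ) • y,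
        hF hxF hyF (by norm_num) (by norm_num) (by norm_num), fun i hi hpos => ?_⟩
      rw [Convex.combo_affine_apply (by norm_num), smul_eq_mul, smul_eq_mul]
      have := hg i x hxF
      have := hg i y hyF
      rcases Finset.mem_insert.1 hi with rfl | hi
      · linarith [(hg i y hyF).lt_of_ne' hy]
      · linarith [hx i hi hpos]
    · refine ⟨x, hxF, fun i hi hpos => ?_⟩
      rcases Finset.mem_insert.1 hi with rfl | hi
      · exact absurd hpos ha
      · exact hx i hi hpos

theorem IsFaceOf.eq_polyhedralFace [Finite ι] {g : ι → E →ᵃ[ℝ] ℝ} {F : Set E}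
    (hF : IsFaceOf F (polyhedralFace g ∅)) (hne : F.Nonempty) :
    F = polyhedralFace g {i | ∀ x ∈ F, g i x = 0} := by
  obtain ⟨hFconv, hFB, hface⟩ := hF
  have hg : ∀ i, ∀ x ∈ F, 0 ≤ g i x := fun i x hx => (hFB hx i).1
  obtain ⟨c, hcF, hc⟩ := hFconv.exists_mem_forall_pos hne hg
  refine subset_antisymm (fun x hx i => ⟨hg i x hx, fun hi => hi x hx⟩) fun y hy => ?_
  have hev : ∀ᶠ ε in 𝓝 (0 : ℝ), ∀ i, 0 ≤ (1 + ε) * g i c - ε * g i y := by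
    rw [eventually_all]
    intro i
    by_cases hi : ∀ x ∈ F, g i x = 0
    · exact Eventually.of_forall fun ε => by simp [hi c hcF, (hy i).2 hi]
    · have hlim : Tendsto (fun ε : ℝ => (1 + ε) * g i c - ε * g i y) (𝓝 0) (𝓝 (g i c)) :=
        (by fun_prop : Continuous fun ε : ℝ => (1 + ε) * g i c - ε * g i y).tendsto' _ _
          (by simp)
      exact (hlim.eventually (eventually_gt_nhds (hc i (by simpa using hi)))).mono fun ε h => h.le
  obtain ⟨ε, hε, hεpos : 0 < ε⟩ := ((hev.filter_mono nhdsWithin_le_nhds).and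
    (self_mem_nhdsWithin (s := Ioi 0))).exists
  have hz : (1 + ε) • c + (-ε) • y ∈ polyhedralFace g ∅ := fun i =>
    ⟨by rw [Convex.combo_affine_apply (add_neg_cancel_right 1 ε), smul_eq_mul, smul_eq_mul]
        linarith [hε i], fun h => h.elim⟩
  have hcomb : (ε / (1 + ε)) • y + (1 - ε / (1 + ε)) • ((1 + ε) • c + (-ε) • y) = c := by
    match_scalars <;> field_simp <;> ring
  refine (hface y (fun i => ⟨(hy i).1, False.elim⟩) _ hz _ (by positivity) ?_
    (hcomb ▸ hcF)).1
  rw [div_lt_one (by positivity)]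
  linarith

end Faces

section Homogenization

variable {q : ℕ} {ι : Type*}

@[simp]
theorem lift1_last (x : Fin q → ℝ) : lift1 x (Fin.last q) = 1 :=
  Fin.snoc_last _ _

def AffineMap.homogenize (f : (Fin q → ℝ) →ᵃ[ℝ] ℝ) : (Fin (q + 1) → ℝ) →ₗ[ℝ] ℝ :=
  f.linear ∘ₗ LinearMap.funLeft ℝ ℝ Fin.castSucc + f 0 • LinearMap.proj (Fin.last q)

@[simp]
theorem AffineMap.homogenize_lift1 (f : (Fin q → ℝ) →ᵃ[ℝ] ℝ) (x : Fin q → ℝ) :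
    f.homogenize (lift1 x) = f x := by
  have hinit : LinearMap.funLeft ℝ ℝ Fin.castSucc (lift1 x) = x := Fin.snoc_comp_castSucc
  have hlin := f.linearMap_vsub x 0
  simp only [vsub_eq_sub, sub_zero] at hlin
  simp [homogenize, hinit, hlin]

def homogCone (g : ι → (Fin q → ℝ) →ᵃ[ℝ] ℝ) (I : Set ι) : PointedCone ℝ (Fin (q + 1) → ℝ) where
  carrier := {y | 0 ≤ y (Fin.last q) ∧
    ∀ i, 0 ≤ (g i).homogenize y ∧ (i ∈ I → (g i).homogenize y = 0)}
  add_mem' := by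
    rintro y z ⟨hy0, hy⟩ ⟨hz0, hz⟩
    refine ⟨by simpa using add_nonneg hy0 hz0, fun i => ?_⟩
    simp only [map_add]
    exact ⟨add_nonneg (hy i).1 (hz i).1, fun hi => by simp [(hy i).2 hi, (hz i).2 hi]⟩
  zero_mem' := by simp
  smul_mem' := by
    rintro ⟨c, hc⟩ y ⟨hy0, hy⟩
    refine ⟨by simpa using mul_nonneg hc hy0, fun i => ?_⟩
    simp only [Nonneg.mk_smul, map_smul, smul_eq_mul]
    exact ⟨mul_nonneg hc (hy i).1, fun hi => by simp [(hy i).2 hi]⟩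

theorem mem_homogCone {g : ι → (Fin q → ℝ) →ᵃ[ℝ] ℝ} {I : Set ι} {y : Fin (q + 1) → ℝ} :
    y ∈ homogCone g I ↔ 0 ≤ y (Fin.last q) ∧
      ∀ i, 0 ≤ (g i).homogenize y ∧ (i ∈ I → (g i).homogenize y = 0) :=
  Iff.rfl

theorem isClosed_homogCone (g : ι → (Fin q → ℝ) →ᵃ[ℝ] ℝ) (I : Set ι) :
    IsClosed (homogCone g I : Set (Fin (q + 1) → ℝ)) := by
  have hcont : ∀ i, Continuous (g i).homogenize := fun i =>
    LinearMap.continuous_of_finiteDimensional _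
  change IsClosed {y | _ ∧ _}
  simp_rw [ofPred_and, ofPred_forall, ofPred_and]
  refine (isClosed_le continuous_const (continuous_apply _)).inter
    (isClosed_iInter fun i => (isClosed_le continuous_const (hcont i)).inter ?_)
  by_cases hi : i ∈ I
  · simpa [hi] using isClosed_eq (hcont i) continuous_const
  · simp [hi]

theorem preimage_lift1_homogCone (g : ι → (Fin q → ℝ) →ᵃ[ℝ] ℝ) (I : Set ι) :
    lift1 ⁻¹' (homogCone g I : Set (Fin (q + 1) → ℝ)) = polyhedralFace g I := by
  ext x
  simp [mem_homogCone, polyhedralFace]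

theorem isFaceOf_homogCone (g : ι → (Fin q → ℝ) →ᵃ[ℝ] ℝ) (I : Set ι) :
    IsFaceOf (homogCone g I : Set (Fin (q + 1) → ℝ)) (homogCone g ∅) := by
  have hsep : (homogCone g I : Set (Fin (q + 1) → ℝ)) =
      {y ∈ homogCone g ∅ | ∀ i ∈ I, (g i).homogenize y = 0} := by
    ext y
    simp only [SetLike.mem_coe, mem_homogCone, mem_empty_iff_false]
    grind
  rw [hsep]
  exact isFaceOf_sep_forall_eq_zero (homogCone g ∅).convex _ (fun i y hy => (hy.2 i).1) I

theorem lift1_inv_smul_projq {z : Fin (q + 1) → ℝ} (hz : z (Fin.last q) ≠ 0) :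
    lift1 ((z (Fin.last q))⁻¹ • projq z) = (z (Fin.last q))⁻¹ • z := by
  ext i
  induction i using Fin.lastCases <;> simp [lift1, projq, hz]

theorem phiMap_preimage_lift1 (C : PointedCone ℝ (Fin (q + 1) → ℝ))
    (hC : IsClosed (C : Set (Fin (q + 1) → ℝ))) (hlast : ∀ y ∈ C, 0 ≤ y (Fin.last q))
    (hne : (lift1 ⁻¹' (C : Set (Fin (q + 1) → ℝ))).Nonempty) :
    PhiMap (lift1 ⁻¹' (C : Set (Fin (q + 1) → ℝ))) = C := by
  obtain ⟨x₀, hx₀⟩ := hne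
  refine subset_antisymm (closure_minimal ?_ hC) fun y hy => ?_
  · rintro _ ⟨l, hl, x, hx, rfl⟩
    exact C.smul_mem hl (convexHull_min (image_preimage_subset _ _) C.convex hx)
  have hpos : ∀ z ∈ C, 0 < z (Fin.last q) → z ∈ coneOf (lift1 '' (lift1 ⁻¹' (C : Set _))) := by
    intro z hz hz₀
    have hlift := lift1_inv_smul_projq hz₀.ne'
    refine ⟨z (Fin.last q), hz₀.le, lift1 ((z (Fin.last q))⁻¹ • projq z),
      subset_convexHull _ _ (mem_image_of_mem _ ?_), ?_⟩
    · rw [mem_preimage, hlift]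
      exact C.smul_mem (inv_nonneg.2 hz₀.le) hz
    · rw [hlift, smul_inv_smul₀ hz₀.ne']
  have hlim : Tendsto (fun ε : ℝ => y + ε • lift1 x₀) (𝓝[>] 0) (𝓝 y) :=
    ((by fun_prop : Continuous fun ε : ℝ => y + ε • lift1 x₀).tendsto' 0 y (by simp)).mono_left
      nhdsWithin_le_nhds
  refine mem_closure_of_tendsto hlim (eventually_mem_nhdsWithin.mono fun ε hε => hpos _
    (C.add_mem hy (C.smul_mem (le_of_lt hε) hx₀)) ?_)
  simp only [Pi.add_apply, Pi.smul_apply, lift1_last, smul_eq_mul, mul_one]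
  linarith [hlast y hy, show (0 : ℝ) < ε from hε]

theorem phiMap_polyhedralFace (g : ι → (Fin q → ℝ) →ᵃ[ℝ] ℝ) (I : Set ι)
    (hne : (polyhedralFace g I).Nonempty) : PhiMap (polyhedralFace g I) = homogCone g I := by
  rw [← preimage_lift1_homogCone] at hne ⊢
  exact phiMap_preimage_lift1 _ (isClosed_homogCone g I) (fun y hy => hy.1) hne

end Homogenization

def slackMap {m n : Type*} [Fintype n] (W : Matrix m n ℝ) (v : m → ℝ) (i : m) :
    (n → ℝ) →ᵃ[ℝ] ℝ :=
  (LinearMap.proj i ∘ₗ W.mulVecLin).toAffineMap - AffineMap.const ℝ (n → ℝ) (v i)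

theorem setOf_le_mulVec_eq_polyhedralFace {m n : Type*} [Fintype n] (W : Matrix m n ℝ)
    (v : m → ℝ) : {x | v ≤ W *ᵥ x} = polyhedralFace (slackMap W v) ∅ := by
  ext x
  simp [polyhedralFace, slackMap, Pi.le_def]

/-- If `F` is a nonempty face of the polyhedron `B`, then `Φ(F)` is a face
of `Φ(B)`. -/
theorem stmt6 (q : ℕ) (B : Set (Fin q → ℝ)) (hB : IsPolyhedron B)
    (F : Set (Fin q → ℝ)) (hF : IsFaceOf F B) (hFne : F.Nonempty) :
    IsFaceOf (PhiMap F) (PhiMap B) := by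
  obtain ⟨k, W, v, rfl⟩ := hB
  rw [setOf_le_mulVec_eq_polyhedralFace] at hF ⊢
  have hBne := hFne.mono hF.2.1
  have hFeq := hF.eq_polyhedralFace hFne
  rw [hFeq] at hFne ⊢
  rw [phiMap_polyhedralFace _ _ hFne, phiMap_polyhedralFace _ _ hBne]
  exact isFaceOf_homogCone _ _
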